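/- Let X and Y be finite collections of pairwise disjoint dyadic intervals and h = Σ_{K∈X, L∈Y} a_{K×L} h_{K×L} ∈ H^p(H^q) with 1 ≤ p, q < ∞. Then Σ_{K∈X} |K| Σ_{L∈Y} |a_{K×L}| |L| ≤ |⋃X|^{1/p'} |⋃Y|^{1/q'} ‖h‖_{H^p(H^q)}, where p', q' are conjugate exponents. -/

import Mathlib

open MeasureTheory

/-- A dyadic interval `[k/2^n, (k+1)/2^n) ⊆ [0,1)`. -/
structure DyadicItv where
  n : ℕ
  k : ℕ
  hk : k < 2 ^ n

instance : DecidableEq DyadicItv := by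
  have h : Function.Injective (fun I : DyadicItv => (I.n, I.k)) := by
    rintro ⟨n, k, hk⟩ ⟨n', k', hk'⟩ e
    simp only [Prod.mk.injEq] at e
    obtain ⟨rfl, rfl⟩ := e
    rfl
  exact h.decidableEq

namespace DyadicItv

/-- The underlying set of a dyadic interval. -/
noncomputable def set (I : DyadicItv) : Set ℝ :=
  Set.Ico ((I.k : ℝ) / 2 ^ I.n) (((I.k : ℝ) + 1) / 2 ^ I.n)

/-- The length `2^{-n}` of a dyadic interval. -/
noncomputable def len (I : DyadicItv) : ℝ := (2 : ℝ)⁻¹ ^ I.n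

/-- Left half `I⁺`. -/
def left (I : DyadicItv) : DyadicItv := ⟨I.n + 1, 2 * I.k, by have := I.hk; rw [pow_succ]; omega⟩

/-- Right half `I⁻`. -/
def right (I : DyadicItv) : DyadicItv := ⟨I.n + 1, 2 * I.k + 1, by have := I.hk; rw [pow_succ]; omega⟩

end DyadicItv

/-- The `L∞`-normalized Haar function `h_I = χ_{I⁺} - χ_{I⁻}`. -/
noncomputable def haar (I : DyadicItv) : ℝ → ℝ := fun x =>
  I.left.set.indicator (fun _ => (1 : ℝ)) x - I.right.set.indicator (fun _ => (1 : ℝ)) x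

/-- Union of the intervals of a finite collection. -/
noncomputable def uset (Z : Finset DyadicItv) : Set ℝ := ⋃ K ∈ Z, K.set

/-- Lebesgue measure of a set, as a real number. -/
noncomputable def msr (s : Set ℝ) : ℝ := (volume s).toReal

/-- The bi-parameter Hardy space square-function norm of `∑_{R ∈ S} a_R h_R`. -/
noncomputable def hNorm (p q : ℝ) (S : Finset (DyadicItv × DyadicItv)) (a : DyadicItv × DyadicItv → ℝ) : ℝ :=
  (∫ x in Set.Ico (0:ℝ) 1,
    (∫ y in Set.Ico (0:ℝ) 1,
      (∑ R ∈ S, (a R) ^ 2 * (haar R.1 x) ^ 2 * (haar R.2 y) ^ 2) ^ (q / 2)) ^ (p / q)) ^ (1 / p)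

/-- The `L²([0,1)²)` pairing of two functions of two variables. -/
noncomputable def pairFn (f g : ℝ → ℝ → ℝ) : ℝ :=
  ∫ x in Set.Ico (0:ℝ) 1, ∫ y in Set.Ico (0:ℝ) 1, f x y * g x y

/-- The function `∑_{R ∈ S} a_R h_R` (bi-parameter Haar expansion). -/
noncomputable def fnOf (S : Finset (DyadicItv × DyadicItv)) (a : DyadicItv × DyadicItv → ℝ) : ℝ → ℝ → ℝ :=
  fun x y => ∑ R ∈ S, a R * haar R.1 x * haar R.2 y

/-- The tensor Haar function `h_{K×L}`. -/
noncomputable def haarR (R : DyadicItv × DyadicItv) : ℝ → ℝ → ℝ := fun x y => haar R.1 x * haar R.2 y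

/-- The dual norm of `(H^p(H^q))^*`. -/
noncomputable def dualNorm (p q : ℝ) (f : ℝ → ℝ → ℝ) : ℝ :=
  sSup {r : ℝ | ∃ S a, hNorm p q S a ≤ 1 ∧ r = pairFn f (fnOf S a)}

/-- The dyadic intervals of level exactly `m`. -/
def dyAt (m : ℕ) : Finset DyadicItv :=
  (Finset.range (2 ^ m)).attach.image fun k => ⟨m, k.1, Finset.mem_range.mp k.2⟩

/-- The dyadic intervals of level at most `N` (i.e. measure at least `2^{-N}`). -/
def dyLE (N : ℕ) : Finset DyadicItv := (Finset.range (N + 1)).biUnion dyAt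

/-- The Haar coefficient of `f` at the dyadic rectangle `R`. -/
noncomputable def coeff (f : ℝ → ℝ → ℝ) (R : DyadicItv × DyadicItv) : ℝ :=
  (∫ x in Set.Ico (0:ℝ) 1, ∫ y in Set.Ico (0:ℝ) 1, f x y * haar R.1 x * haar R.2 y) /
    (R.1.len * R.2.len)

/-- The `H_N^p(H_N^q)` norm of a function (via its Haar coefficients). -/
noncomputable def hardyNorm (p q : ℝ) (N : ℕ) (f : ℝ → ℝ → ℝ) : ℝ :=
  hNorm p q (dyLE N ×ˢ dyLE N) (coeff f)

/-- The randomized block `b_{I×J}^{(θ,ε)} = ∑_{K ∈ X_I, L ∈ Y_J} θ_K ε_L h_{K×L}`. -/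
noncomputable def bB (X Y : DyadicItv → Finset DyadicItv) (θ ε : DyadicItv → ℝ) (I J : DyadicItv) :
    ℝ → ℝ → ℝ := fun x y => ∑ K ∈ X I, ∑ L ∈ Y J, θ K * ε L * haar K x * haar L y

/-- Jones' condition (J1): each collection consists of pairwise disjoint dyadic intervals,
and collections for distinct indices are disjoint. -/
def J1cond (X : DyadicItv → Finset DyadicItv) : Prop :=
  (∀ I, (↑(X I) : Set DyadicItv).Pairwise fun K K' => Disjoint K.set K'.set) ∧
    ∀ I I', I ≠ I' → Disjoint (X I) (X I')

/-- Jones' compatibility condition (J1)–(J4) with constant `κ`. -/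
def Jones (κ : ℝ) (Z : DyadicItv → Finset DyadicItv) : Prop :=
  J1cond Z ∧
  (∀ I : DyadicItv, uset (Z I.left) ∪ uset (Z I.right) ⊆ uset (Z I) ∧
      Disjoint (uset (Z I.left)) (uset (Z I.right))) ∧
  (∀ I : DyadicItv, κ⁻¹ * I.len ≤ msr (uset (Z I)) ∧ msr (uset (Z I)) ≤ κ * I.len) ∧
  (∀ I0 I : DyadicItv, I0.set ⊆ I.set → ∀ K ∈ Z I,
      κ⁻¹ * (msr (uset (Z I0)) / msr (uset (Z I))) ≤ msr (K.set ∩ uset (Z I0)) / K.len)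


section AuxCHE

lemma DyadicItv.set_sub (I : DyadicItv) : I.set ⊆ Set.Ico (0:ℝ) 1 := by
  rintro x ⟨h1, h2⟩
  constructor
  · refine le_trans ?_ h1; positivity
  · refine lt_of_lt_of_le h2 ?_
    rw [div_le_one (by positivity)]
    have := I.hk
    have : (I.k : ℝ) + 1 ≤ 2 ^ I.n := by exact_mod_cast Nat.succ_le_of_lt this
    simpa using this

lemma DyadicItv.measurable_set (I : DyadicItv) : MeasurableSet I.set := measurableSet_Ico

lemma DyadicItv.volume_set (I : DyadicItv) : volume I.set = ENNReal.ofReal I.len := by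
  rw [DyadicItv.set, Real.volume_Ico]
  congr 1
  rw [DyadicItv.len]
  field_simp
  rw [← mul_pow]; norm_num

lemma DyadicItv.len_nonneg (I : DyadicItv) : 0 ≤ I.len := by rw [DyadicItv.len]; positivity

lemma DyadicItv.halves (I : DyadicItv) :
    I.left.set ∪ I.right.set = I.set ∧ Disjoint I.left.set I.right.set := by
  have e1 : ((I.left.k : ℝ)) / 2 ^ I.left.n = (I.k : ℝ) / 2 ^ I.n := by
    show ((2 * I.k : ℕ) : ℝ) / 2 ^ (I.n+1) = _
    push_cast; rw [pow_succ]; field_simp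
  have e2 : ((I.right.k : ℝ) + 1) / 2 ^ I.right.n = ((I.k : ℝ) + 1) / 2 ^ I.n := by
    show (((2 * I.k + 1 : ℕ) : ℝ) + 1) / 2 ^ (I.n+1) = _
    push_cast; rw [pow_succ]; field_simp; ring
  have e3 : ((I.left.k : ℝ) + 1) / 2 ^ I.left.n = ((I.right.k : ℝ)) / 2 ^ I.right.n := by
    show (((2 * I.k : ℕ) : ℝ) + 1) / 2 ^ (I.n+1) = ((2 * I.k + 1 : ℕ) : ℝ) / 2 ^ (I.n+1)
    push_cast; ring
  constructor
  · rw [DyadicItv.set, DyadicItv.set, DyadicItv.set, e1, e2, e3]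
    apply Set.Ico_union_Ico_eq_Ico
    all_goals {
      have h1 : (0:ℝ) < 2 ^ I.left.n := by positivity
      have hk : (I.left.k:ℝ) + 1 = I.right.k := by
        show ((2*I.k:ℕ):ℝ) + 1 = ((2*I.k+1:ℕ):ℝ); push_cast; ring
      have hn : (2:ℝ) ^ I.left.n = 2 ^ I.right.n := rfl
      first
      | (rw [← e1, ← e3, div_le_div_iff₀ h1 h1]; nlinarith [h1])
      | (rw [← e2, div_le_div_iff₀ (hn ▸ h1) (hn ▸ h1)]; nlinarith [hn ▸ h1]) }
  · rw [DyadicItv.set, DyadicItv.set, e3]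
    exact Set.Ico_disjoint_Ico.2 (inf_le_left.trans le_sup_right)

lemma haar_sq (I : DyadicItv) (x : ℝ) : (haar I x) ^ 2 = I.set.indicator (fun _ => (1:ℝ)) x := by
  obtain ⟨hu, hdisj⟩ := I.halves
  rw [haar]
  by_cases hl : x ∈ I.left.set
  · have hr : x ∉ I.right.set := fun hr => (hdisj.ne_of_mem hl hr) rfl
    have hI : x ∈ I.set := hu ▸ Set.mem_union_left _ hl
    simp [Set.indicator_of_mem, Set.indicator_of_notMem, hl, hr, hI]
  · by_cases hr : x ∈ I.right.set
    · have hI : x ∈ I.set := hu ▸ Set.mem_union_right _ hr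
      simp [Set.indicator_of_mem, Set.indicator_of_notMem, hl, hr, hI]
    · have hI : x ∉ I.set := by rw [← hu]; simp [hl, hr]
      simp [Set.indicator_of_notMem, hl, hr, hI]

lemma ind_const (s : Set ℝ) (c : ℝ) (y : ℝ) :
    s.indicator (fun _ => c) y = c * s.indicator (fun _ => (1:ℝ)) y := by
  by_cases h : y ∈ s <;> simp [h]

/-- Pointwise: a function with `φ 0 = 0` applied to a sum of indicators of pairwise
disjoint sets equals the sum of the indicators of the pointwise images. -/
lemma phi_indicator_sum {ι : Type*} (s : Finset ι) (f : ι → Set ℝ)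
    (hdisj : (↑s : Set ι).Pairwise fun i j => Disjoint (f i) (f j))
    (c : ι → ℝ) (φ : ℝ → ℝ) (hφ : φ 0 = 0) (y : ℝ) :
    φ (∑ i ∈ s, (f i).indicator (fun _ => c i) y) =
      ∑ i ∈ s, (f i).indicator (fun _ => φ (c i)) y := by
  by_cases h : ∃ i ∈ s, y ∈ f i
  · obtain ⟨i₀, hi₀s, hy⟩ := h
    rw [Finset.sum_eq_single i₀
      (fun j hj hne => Set.indicator_of_notMem
        (fun hyj => (hdisj hj hi₀s hne).ne_of_mem hyj hy rfl) _)
      (fun h => (h hi₀s).elim), Set.indicator_of_mem hy,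
      Finset.sum_eq_single i₀
      (fun j hj hne => Set.indicator_of_notMem
        (fun hyj => (hdisj hj hi₀s hne).ne_of_mem hyj hy rfl) _)
      (fun h => (h hi₀s).elim), Set.indicator_of_mem hy]
  · push_neg at h
    rw [Finset.sum_eq_zero (fun i hi => Set.indicator_of_notMem (h i hi) _),
        Finset.sum_eq_zero (fun i hi => Set.indicator_of_notMem (h i hi) _), hφ]

lemma integral_dyadic_sum (Z : Finset DyadicItv) (c : DyadicItv → ℝ) :
    ∫ x in Set.Ico (0:ℝ) 1, ∑ K ∈ Z, K.set.indicator (fun _ => c K) x =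
      ∑ K ∈ Z, c K * K.len := by
  rw [MeasureTheory.integral_finset_sum]
  · refine Finset.sum_congr rfl fun K _ => ?_
    rw [MeasureTheory.setIntegral_indicator K.measurable_set,
      Set.inter_eq_right.2 K.set_sub, MeasureTheory.setIntegral_const, smul_eq_mul,
      measureReal_def, K.volume_set, ENNReal.toReal_ofReal K.len_nonneg, mul_comm]
  · intro K _
    rw [MeasureTheory.integrable_indicator_iff K.measurable_set]
    refine MeasureTheory.integrableOn_const (ne_of_lt ?_)
    calc (volume.restrict (Set.Ico (0:ℝ) 1)) K.set ≤ volume K.set :=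
          Measure.restrict_le_self _
      _ < ⊤ := by rw [K.volume_set]; exact ENNReal.ofReal_lt_top

lemma msr_uset_eq (Z : Finset DyadicItv)
    (hZ : (↑Z : Set DyadicItv).Pairwise fun K K' => Disjoint K.set K'.set) :
    msr (uset Z) = ∑ K ∈ Z, K.len := by
  rw [msr, uset, measure_biUnion_finset hZ (fun K _ => K.measurable_set),
    ENNReal.toReal_sum (fun K _ => by rw [K.volume_set]; exact ENNReal.ofReal_ne_top)]
  exact Finset.sum_congr rfl fun K _ => by
    rw [K.volume_set, ENNReal.toReal_ofReal K.len_nonneg]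

end AuxCHE

/-- the Hölder-type estimate for coefficients of a bi-parameter Haar expansion. -/
theorem coefficient_holder_estimate (p q : ℝ) (hp : 1 ≤ p) (hq : 1 ≤ q)
    (X Y : Finset DyadicItv)
    (hXd : (↑X : Set DyadicItv).Pairwise fun K K' => Disjoint K.set K'.set)
    (hYd : (↑Y : Set DyadicItv).Pairwise fun L L' => Disjoint L.set L'.set)
    (a : DyadicItv × DyadicItv → ℝ) :
    ∑ K ∈ X, K.len * ∑ L ∈ Y, |a (K, L)| * L.len ≤
      msr (uset X) ^ (1 - 1 / p) * msr (uset Y) ^ (1 - 1 / q) * hNorm p q (X ×ˢ Y) a := by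
  have hp0 : (0:ℝ) < p := lt_of_lt_of_le one_pos hp
  have hq0 : (0:ℝ) < q := lt_of_lt_of_le one_pos hq
  have hq2 : q / 2 ≠ 0 := by positivity
  have hpq : p / q ≠ 0 := by positivity
  set T : DyadicItv → ℝ := fun K => ∑ L ∈ Y, |a (K, L)| ^ q * L.len with hT
  have hTnn : ∀ K, 0 ≤ T K := fun K =>
    Finset.sum_nonneg fun L _ =>
      mul_nonneg (Real.rpow_nonneg (abs_nonneg _) _) L.len_nonneg
  -- Step 1: compute the H^p(H^q) norm exactly
  have habs : ∀ t : ℝ, ((t ^ 2 : ℝ)) ^ (q / 2 : ℝ) = |t| ^ q := by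
    intro t
    rw [← sq_abs, ← Real.rpow_natCast |t| 2, ← Real.rpow_mul (abs_nonneg t)]
    congr 1
    push_cast
    ring
  have e_inner : ∀ x : ℝ,
      (∫ y in Set.Ico (0:ℝ) 1,
        (∑ R ∈ X ×ˢ Y, a R ^ 2 * haar R.1 x ^ 2 * haar R.2 y ^ 2) ^ (q / 2)) =
      ∑ K ∈ X, K.set.indicator (fun _ => T K) x := by
    intro x
    set g : DyadicItv → ℝ := fun L => ∑ K ∈ X, K.set.indicator (fun _ => a (K, L) ^ 2) x with hg
    have h1 : ∀ y : ℝ, (∑ R ∈ X ×ˢ Y, a R ^ 2 * haar R.1 x ^ 2 * haar R.2 y ^ 2) =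
        ∑ L ∈ Y, L.set.indicator (fun _ => g L) y := by
      intro y
      rw [Finset.sum_product, Finset.sum_comm]
      refine Finset.sum_congr rfl fun L _ => ?_
      rw [ind_const, hg, Finset.sum_mul]
      refine Finset.sum_congr rfl fun K _ => ?_
      rw [haar_sq K, haar_sq L, ind_const K.set (a (K, L) ^ 2) x]
    have h2 : ∀ y : ℝ, (∑ L ∈ Y, L.set.indicator (fun _ => g L) y) ^ (q / 2 : ℝ) =
        ∑ L ∈ Y, L.set.indicator (fun _ => (g L) ^ (q / 2 : ℝ)) y :=
      phi_indicator_sum Y _ hYd g (fun t => t ^ (q / 2 : ℝ)) (Real.zero_rpow hq2)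
    simp only [h1, h2]
    rw [integral_dyadic_sum]
    have h3 : ∀ L, (g L) ^ (q / 2 : ℝ) =
        ∑ K ∈ X, K.set.indicator (fun _ => |a (K, L)| ^ q) x := by
      intro L
      rw [hg, phi_indicator_sum X _ hXd _ (fun t => t ^ (q / 2 : ℝ)) (Real.zero_rpow hq2)]
      exact Finset.sum_congr rfl fun K _ => by simp only [habs]
    calc ∑ L ∈ Y, (g L) ^ (q / 2 : ℝ) * L.len
        = ∑ K ∈ X, ∑ L ∈ Y, K.set.indicator (fun _ => |a (K, L)| ^ q) x * L.len := by
          rw [Finset.sum_comm]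
          exact Finset.sum_congr rfl fun L _ => by rw [h3, Finset.sum_mul]
      _ = ∑ K ∈ X, K.set.indicator (fun _ => T K) x := by
          refine Finset.sum_congr rfl fun K _ => ?_
          by_cases hx : x ∈ K.set
          · simp [Set.indicator_of_mem hx, hT]
          · simp [Set.indicator_of_notMem hx]
  have e_norm : hNorm p q (X ×ˢ Y) a =
      (∑ K ∈ X, (T K) ^ (p / q : ℝ) * K.len) ^ (1 / p : ℝ) := by
    rw [hNorm]
    congr 1
    simp only [e_inner]
    have h4 : ∀ x : ℝ, (∑ K ∈ X, K.set.indicator (fun _ => T K) x) ^ (p / q : ℝ) =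
        ∑ K ∈ X, K.set.indicator (fun _ => (T K) ^ (p / q : ℝ)) x :=
      phi_indicator_sum X _ hXd T (fun t => t ^ (p / q : ℝ)) (Real.zero_rpow hpq)
    simp only [h4]
    exact integral_dyadic_sum X _
  -- Step 2: Hölder in L
  have hA : msr (uset X) = ∑ K ∈ X, K.len := msr_uset_eq X hXd
  have hB : msr (uset Y) = ∑ L ∈ Y, L.len := msr_uset_eq Y hYd
  have holderL : ∀ K, ∑ L ∈ Y, |a (K, L)| * L.len ≤
      (∑ L ∈ Y, L.len) ^ (1 - 1/q : ℝ) * (T K) ^ (1/q : ℝ) := by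
    intro K
    have := Real.inner_le_weight_mul_Lp_of_nonneg Y hq (fun L => L.len)
      (fun L => |a (K, L)|) (fun L => L.len_nonneg) (fun L => abs_nonneg _)
    simp only [one_div, ← hT]
    calc ∑ L ∈ Y, |a (K, L)| * L.len = ∑ L ∈ Y, L.len * |a (K, L)| :=
          Finset.sum_congr rfl fun L _ => mul_comm _ _
      _ ≤ (∑ L ∈ Y, L.len) ^ (1 - q⁻¹ : ℝ) * (∑ L ∈ Y, L.len * |a (K, L)| ^ q) ^ (q⁻¹ : ℝ) := this
      _ = (∑ L ∈ Y, L.len) ^ (1 - q⁻¹ : ℝ) * (T K) ^ (q⁻¹ : ℝ) := by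
          rw [hT]
          congr 2
          exact Finset.sum_congr rfl fun L _ => mul_comm _ _
  -- Step 3: Hölder in K
  have holderK : ∑ K ∈ X, K.len * (T K) ^ (1/q : ℝ) ≤
      (∑ K ∈ X, K.len) ^ (1 - 1/p : ℝ) * (∑ K ∈ X, (T K) ^ (p/q : ℝ) * K.len) ^ (1/p : ℝ) := by
    have := Real.inner_le_weight_mul_Lp_of_nonneg X hp (fun K => K.len)
      (fun K => (T K) ^ (1/q : ℝ)) (fun K => K.len_nonneg)
      (fun K => Real.rpow_nonneg (hTnn K) _)
    simp only [one_div] at this ⊢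
    refine le_trans this (le_of_eq ?_)
    congr 1
    congr 1
    refine Finset.sum_congr rfl fun K _ => ?_
    rw [← Real.rpow_mul (hTnn K), inv_mul_eq_div, mul_comm]
  -- Final assembly
  have hBnn : (0:ℝ) ≤ ∑ L ∈ Y, L.len := Finset.sum_nonneg fun L _ => L.len_nonneg
  calc ∑ K ∈ X, K.len * ∑ L ∈ Y, |a (K, L)| * L.len
      ≤ ∑ K ∈ X, K.len * ((∑ L ∈ Y, L.len) ^ (1 - 1/q : ℝ) * (T K) ^ (1/q : ℝ)) :=
        Finset.sum_le_sum fun K _ => mul_le_mul_of_nonneg_left (holderL K) K.len_nonneg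
    _ = (∑ L ∈ Y, L.len) ^ (1 - 1/q : ℝ) * ∑ K ∈ X, K.len * (T K) ^ (1/q : ℝ) := by
        rw [Finset.mul_sum]
        exact Finset.sum_congr rfl fun K _ => by ring
    _ ≤ (∑ L ∈ Y, L.len) ^ (1 - 1/q : ℝ) *
          ((∑ K ∈ X, K.len) ^ (1 - 1/p : ℝ) *
            (∑ K ∈ X, (T K) ^ (p/q : ℝ) * K.len) ^ (1/p : ℝ)) :=
        mul_le_mul_of_nonneg_left holderK (Real.rpow_nonneg hBnn _)
    _ = msr (uset X) ^ (1 - 1 / p) * msr (uset Y) ^ (1 - 1 / q) * hNorm p q (X ×ˢ Y) a := by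
        rw [e_norm, hA, hB]
        ring
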